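/- Let p be a prime, F a field of characteristic p, V a finite group, U a subgroup of V, and K a normal subgroup of V contained in U. If F₀ is a finite-dimensional projective F[U/K]-module, then every indecomposable direct summand of the induced module Ind_U^V(Inf_{U/K}(F₀)) is isomorphic to the inflation of a projective F[V/K]-module; in particular, every such summand is a direct summand of a finite direct sum of copies of the permutation module F[V/K], hence exprojective. -/

import Mathlib

open CategoryTheory Limits

/-- `M` is (isomorphic to) a direct summand of `N`, i.e. a retract of `N`. -/
def IsDirectSummand {C : Type*} [Category C] (M N : C) : Prop :=
  ∃ (i : M ⟶ N) (r : N ⟶ M), i ≫ r = 𝟙 M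

instance {F : Type} [Field F] {G : Type} [Group G] : HasFiniteBiproducts (Rep.{0} F G) :=
  HasFiniteBiproducts.of_hasFiniteProducts

/-- A representation is indecomposable if it is nonzero and in any decomposition
as a direct sum of two representations, one factor is zero. -/
def RepIndecomposable {F : Type} [Field F] {G : Type} [Group G] (M : Rep.{0} F G) : Prop :=
  ¬ IsZero M ∧ ∀ X Y : Rep F G, Nonempty (M ≅ X ⊞ Y) → IsZero X ∨ IsZero Y

/-- A representation is exprojective if it is isomorphic to a direct summand of a
finite direct sum of permutation modules `F[G/K]` with each `K` normal in `G`. -/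
def Exprojective {F : Type} [Field F] {G : Type} [Group G] (M : Rep.{0} F G) : Prop :=
  ∃ (n : ℕ) (K : Fin n → Subgroup G), (∀ i, (K i).Normal) ∧
    IsDirectSummand M (⨁ fun i => Rep.ofMulAction F G (G ⧸ K i))

variable {F : Type} [Field F] {G : Type} [Group G]

/-- The relations defining `F[G] ⊗_{F[H]} E`: `(g h) ⊗ v = g ⊗ (h ⬝ v)`. -/
noncomputable def indRel (H : Subgroup G) (E : Rep.{0} F H) : Submodule F (G →₀ E) :=
  Submodule.span F {x : G →₀ E | ∃ (g : G) (h : H) (v : E),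
    x = Finsupp.single (g * (h : G)) v - Finsupp.single g (E.ρ h v)}

/-- Left translation by `g₀` on `F[G] ⊗_F E`. -/
noncomputable def indMap (H : Subgroup G) (E : Rep.{0} F H) (g₀ : G) :
    (G →₀ E) →ₗ[F] (G →₀ E) :=
  Finsupp.lmapDomain E F (fun g => g₀ * g)

lemma indRel_le (H : Subgroup G) (E : Rep.{0} F H) (g₀ : G) :
    indRel H E ≤ (indRel H E).comap (indMap H E g₀) := by
  rw [indRel, Submodule.span_le]
  rintro x ⟨g, h, v, rfl⟩
  simp only [SetLike.mem_coe, Submodule.mem_comap, map_sub, indMap, Finsupp.lmapDomain_apply,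
    Finsupp.mapDomain_single]
  exact Submodule.subset_span ⟨g₀ * g, h, v, by rw [mul_assoc]⟩

/-- The representation of `G` on `F[G] ⊗_{F[H]} E` by left translation. -/
noncomputable def indρ (H : Subgroup G) (E : Rep.{0} F H) :
    Representation F G ((G →₀ E) ⧸ indRel H E) where
  toFun g₀ := Submodule.mapQ _ _ (indMap H E g₀) (indRel_le H E g₀)
  map_one' := by
    apply Submodule.linearMap_qext
    ext g v
    simp [indMap, Submodule.mapQ_apply]
  map_mul' g₁ g₂ := by
    apply Submodule.linearMap_qext
    ext g v
    simp [indMap, Submodule.mapQ_apply, mul_assoc]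

/-- The induced module `Ind_H^G E = F[G] ⊗_{F[H]} E`. -/
noncomputable def ind (H : Subgroup G) (E : Rep.{0} F H) : Rep.{0} F G := Rep.of (indρ H E)
/-!
Because `K ≤ U`, inducing the inflation of `F₀` from `U` to `V` is the same as inflating
`Ind_{U/K}^{V/K} F₀`, which is projective since induction is left adjoint to restriction and
restriction preserves epimorphisms. So `K` acts trivially on every summand `M`, i.e. `M` is the
inflation of some `Q`; as inflation is fully faithful, `Q` is a summand of that projective module.
Being finite-dimensional, `Q` is then a summand of a free module `F[V/K]ⁿ`, whose inflation is the
permutation module `F[V/K]ⁿ`.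
-/

lemma isDirectSummand_iff_nonempty_retract {C : Type*} [Category C] {M N : C} :
    IsDirectSummand M N ↔ Nonempty (Retract M N) :=
  ⟨fun ⟨i, r, h⟩ => ⟨⟨i, r, h⟩⟩, fun ⟨h⟩ => ⟨h.i, h.r, h.retract⟩⟩

namespace CategoryTheory.Retract

def preimage {C D : Type*} [Category C] [Category D] {Φ : C ⥤ D} (hΦ : Φ.FullyFaithful)
    {X Y : C} (h : Retract (Φ.obj X) (Φ.obj Y)) : Retract X Y where
  i := hΦ.preimage h.i
  r := hΦ.preimage h.r
  retract := hΦ.map_injective (by simp)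

variable {M N : Rep.{0} F G}

lemma le_ker_ρ {K : Subgroup G} (h : Retract M N) (hN : K ≤ N.ρ.ker) : K ≤ M.ρ.ker := by
  intro k hk
  rw [MonoidHom.mem_ker]
  ext x
  have hi : h.i.hom (M.ρ k x) = h.i.hom x := by
    rw [Rep.hom_comm_apply, MonoidHom.mem_ker.mp (hN hk)]
    rfl
  have hri (y : M) : h.r.hom (h.i.hom y) = y := congrArg (fun f => f.hom y) h.retract
  simpa only [hri, Module.End.one_apply] using congrArg h.r.hom hi

lemma finiteDimensional (h : Retract M N) [FiniteDimensional F N.V] : FiniteDimensional F M.V :=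
  Module.Finite.of_surjective h.r.hom.toLinearMap fun y =>
    ⟨h.i.hom y, congrArg (fun f => f.hom y) h.retract⟩

end CategoryTheory.Retract

section Induction

variable {H : Subgroup G} {E : Rep.{0} F H}

variable (H E) in
noncomputable abbrev indMk : (G →₀ E) →ₗ[F] ind H E := (indRel H E).mkQ

instance [Finite G] [FiniteDimensional F E.V] : FiniteDimensional F (ind H E).V :=
  Module.Finite.of_surjective (indMk H E) (Submodule.mkQ_surjective _)

lemma ind_ρ_indMk_single (g₀ g : G) (v : E) :
    (ind H E).ρ g₀ (indMk H E (Finsupp.single g v)) =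
      indMk H E (Finsupp.single (g₀ * g) v) := by
  change indMk H E (indMap H E g₀ (Finsupp.single g v)) = _
  simp [indMap]

lemma indMk_single_mul (g : G) (h : H) (v : E) :
    indMk H E (Finsupp.single (g * h) v) = indMk H E (Finsupp.single g (E.ρ h v)) := by
  rw [← sub_eq_zero, ← map_sub]
  exact (Submodule.Quotient.mk_eq_zero _).mpr (Submodule.subset_span ⟨g, h, v, rfl⟩)

lemma ind_hom_ext {X : Rep.{0} F G} {f f' : ind H E ⟶ X}
    (h : ∀ (g : G) (v : E), f.hom (indMk H E (Finsupp.single g v))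
      = f'.hom (indMk H E (Finsupp.single g v))) : f = f' := by
  apply Rep.hom_ext
  apply Representation.IntertwiningMap.ext
  apply Submodule.linearMap_qext
  ext g v
  exact h g v

variable (H E) in
noncomputable def indUnit : E ⟶ Rep.res H.subtype (ind H E) :=
  Rep.ofHom ⟨(indMk H E).comp (Finsupp.lsingle 1), fun h => by
    ext v
    simp only [LinearMap.comp_apply, Finsupp.lsingle_apply]
    rw [← indMk_single_mul, one_mul, MonoidHom.comp_apply, ind_ρ_indMk_single, mul_one]
    rfl⟩

variable {X : Rep.{0} F G}

noncomputable def indDescLinearMap (φ : E ⟶ Rep.res H.subtype X) : ind H E →ₗ[F] X :=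
  (indRel H E).liftQ (Finsupp.lsum F fun g => (X.ρ g).comp φ.hom.toLinearMap) (by
    rw [indRel, Submodule.span_le]
    rintro _ ⟨g, h, v, rfl⟩
    simp only [SetLike.mem_coe, LinearMap.mem_ker, map_sub, Finsupp.lsum_single,
      LinearMap.comp_apply, sub_eq_zero, Representation.IntertwiningMap.coe_toLinearMap]
    rw [Rep.hom_comm_apply φ h v, map_mul]
    rfl)

lemma indDescLinearMap_indMk_single (φ : E ⟶ Rep.res H.subtype X) (g : G) (v : E) :
    indDescLinearMap φ (indMk H E (Finsupp.single g v)) = X.ρ g (φ.hom v) := by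
  change Finsupp.lsum F (fun g => (X.ρ g).comp φ.hom.toLinearMap) (Finsupp.single g v) = _
  simp

noncomputable def indDesc (φ : E ⟶ Rep.res H.subtype X) : ind H E ⟶ X :=
  Rep.ofHom ⟨indDescLinearMap φ, fun g₀ => by
    apply Submodule.linearMap_qext
    ext g v
    change indDescLinearMap φ ((ind H E).ρ g₀ (indMk H E (Finsupp.single g v))) =
      X.ρ g₀ (indDescLinearMap φ (indMk H E (Finsupp.single g v)))
    rw [ind_ρ_indMk_single, indDescLinearMap_indMk_single, indDescLinearMap_indMk_single, map_mul,
      Module.End.mul_apply]⟩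

lemma indDesc_indMk_single (φ : E ⟶ Rep.res H.subtype X) (g : G) (v : E) :
    (indDesc φ).hom (indMk H E (Finsupp.single g v)) = X.ρ g (φ.hom v) :=
  indDescLinearMap_indMk_single φ g v

instance projective_ind [Projective E] : Projective (ind H E) where
  factors {Y Z} f e _ := by
    have : Epi ((Rep.resFunctor H.subtype).map e) :=
      (Rep.epi_iff_surjective _).mpr ((Rep.epi_iff_surjective e).mp ‹_›)
    obtain ⟨φ, hφ⟩ := Projective.factors (indUnit H E ≫ (Rep.resFunctor H.subtype).map f)
      ((Rep.resFunctor H.subtype).map e)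
    refine ⟨indDesc φ, ind_hom_ext fun g v => ?_⟩
    have hφv : e.hom (φ.hom v) = f.hom (indMk H E (Finsupp.single 1 v)) :=
      congrArg (fun ψ => ψ.hom v) hφ
    calc (indDesc φ ≫ e).hom (indMk H E (Finsupp.single g v))
        = Z.ρ g (e.hom (φ.hom v)) := by
          rw [Rep.hom_comp, Representation.IntertwiningMap.comp_apply, indDesc_indMk_single]
          exact Rep.hom_comm_apply e g _
      _ = f.hom (indMk H E (Finsupp.single g v)) := by
        rw [hφv, ← Rep.hom_comm_apply, ind_ρ_indMk_single, mul_one]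

lemma le_ker_ind {K : Subgroup G} [K.Normal] (hKH : K ≤ H)
    (hE : K.subgroupOf H ≤ E.ρ.ker) : K ≤ (ind H E).ρ.ker := by
  intro k hk
  rw [MonoidHom.mem_ker]
  refine Submodule.linearMap_qext _ (Finsupp.lhom_ext' fun g => LinearMap.ext fun v => ?_)
  change (ind H E).ρ k (indMk H E (Finsupp.single g v)) = indMk H E (Finsupp.single g v)
  have hconj : g⁻¹ * k * g ∈ K := by simpa using ‹K.Normal›.conj_mem k hk g⁻¹
  have hkg : k * g = g * ((⟨g⁻¹ * k * g, hKH hconj⟩ : H) : G) := by group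
  rw [ind_ρ_indMk_single, hkg, indMk_single_mul, MonoidHom.mem_ker.mp (hE hconj)]
  rfl

end Induction

section Descent

variable {K : Subgroup G} [K.Normal]

noncomputable def descend (M : Rep.{0} F G) (hM : K ≤ M.ρ.ker) : Rep.{0} F (G ⧸ K) :=
  Rep.of (QuotientGroup.lift K M.ρ hM)

noncomputable def descendIso (M : Rep.{0} F G) (hM : K ≤ M.ρ.ker) :
    M ≅ Rep.res (QuotientGroup.mk' K) (descend M hM) :=
  Rep.mkIso (ρ := M.ρ) (Representation.Equiv.mk (LinearEquiv.refl F M.V) fun _ => rfl)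

variable (K) in
noncomputable def inflFullyFaithful :
    (Rep.resFunctor.{0} (k := F) (QuotientGroup.mk' K)).FullyFaithful :=
  have := Rep.full_res.{0} (k := F) (QuotientGroup.mk' K) (QuotientGroup.mk'_surjective K)
  .ofFullyFaithful _

end Descent

section IndInfl

variable {K U : Subgroup G} [K.Normal] (E : Rep.{0} F (U.map (QuotientGroup.mk' K)))

local notation "Ū" => U.map (QuotientGroup.mk' K)
local notation "π" => MonoidHom.subgroupMap (QuotientGroup.mk' K) U

lemma le_ker_ind_res (hKU : K ≤ U) : K ≤ (ind U (Rep.res π E)).ρ.ker := by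
  refine le_ker_ind hKU fun u hu => ?_
  rw [← QuotientGroup.ker_mk' K, ← Subgroup.ker_subgroupMap] at hu
  simp [MonoidHom.mem_ker.mp hu]

noncomputable def indInflHom : ind U (Rep.res π E) ⟶ Rep.res (QuotientGroup.mk' K) (ind Ū E) :=
  indDesc (Rep.ofHom ⟨(indUnit Ū E).hom.toLinearMap, fun u => (indUnit Ū E).hom.2 (π u)⟩)

lemma indInflHom_indMk_single (g : G) (v : E) :
    (indInflHom E).hom (indMk U (Rep.res π E) (Finsupp.single g v)) =
      indMk Ū E (Finsupp.single (QuotientGroup.mk g) v) := by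
  rw [indInflHom, indDesc_indMk_single]
  exact (ind_ρ_indMk_single (H := Ū) _ _ _).trans (by rw [mul_one]; rfl)

noncomputable def indInflInv (hKU : K ≤ U) :
    ind Ū E ⟶ descend (ind U (Rep.res π E)) (le_ker_ind_res E hKU) :=
  indDesc (Rep.ofHom ⟨(indUnit U (Rep.res π E)).hom.toLinearMap, fun u => by
    obtain ⟨u, rfl⟩ := (QuotientGroup.mk' K).subgroupMap_surjective U u
    exact (indUnit U (Rep.res π E)).hom.2 u⟩)

lemma indInflInv_indMk_single (hKU : K ≤ U) (g : G) (v : E) :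
    (indInflInv E hKU).hom (indMk Ū E (Finsupp.single (QuotientGroup.mk g) v)) =
      indMk U (Rep.res π E) (Finsupp.single g v) := by
  rw [indInflInv, indDesc_indMk_single]
  exact (ind_ρ_indMk_single (H := U) _ _ _).trans (by rw [mul_one])

noncomputable def indInflIso (hKU : K ≤ U) :
    ind U (Rep.res π E) ≅ Rep.res (QuotientGroup.mk' K) (ind Ū E) where
  hom := indInflHom E
  inv := (Rep.resFunctor (QuotientGroup.mk' K)).map (indInflInv E hKU) ≫
    (descendIso _ (le_ker_ind_res E hKU)).inv
  hom_inv_id := ind_hom_ext fun g v => by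
    change (indInflInv E hKU).hom ((indInflHom E).hom _) = _
    rw [indInflHom_indMk_single, indInflInv_indMk_single]
    rfl
  inv_hom_id := by
    refine Rep.hom_ext (Representation.IntertwiningMap.ext (Submodule.linearMap_qext _
      (Finsupp.lhom_ext' fun q => LinearMap.ext fun v => ?_)))
    induction q using QuotientGroup.induction_on with | H g => ?_
    change (indInflHom E).hom ((indInflInv E hKU).hom (indMk Ū E (Finsupp.single (g : G ⧸ K) v)))
      = indMk Ū E (Finsupp.single (g : G ⧸ K) v)
    rw [indInflInv_indMk_single, indInflHom_indMk_single]

end IndInfl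

section Permutation

lemma exists_retract_biproduct_leftRegular (Q : Rep.{0} F G) [FiniteDimensional F Q.V]
    [Projective Q] :
    ∃ n : ℕ, Nonempty (Retract Q (⨁ fun _ : Fin n => Rep.leftRegular F G)) := by
  let b := Module.finBasis F Q.V
  let π : (⨁ fun _ : Fin (Module.finrank F Q.V) => Rep.leftRegular F G) ⟶ Q :=
    biproduct.desc fun j => Rep.leftRegularHom Q (b j)
  have hb (j) : π.hom ((biproduct.ι (fun _ => Rep.leftRegular F G) j).hom
      (MonoidAlgebra.single 1 1)) = b j := by
    change (biproduct.ι _ j ≫ π).hom _ = _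
    simp [π]
  have : Epi π := by
    rw [Rep.epi_iff_surjective]
    change Function.Surjective π.hom.toLinearMap
    rw [← LinearMap.range_eq_top, eq_top_iff, ← b.span_eq, Submodule.span_le]
    rintro _ ⟨j, rfl⟩
    exact ⟨_, hb j⟩
  exact ⟨_, ⟨⟨Projective.factorThru (𝟙 Q) π, π, Projective.factorThru_comp _ _⟩⟩⟩

noncomputable def inflLeftRegularIso (K : Subgroup G) [K.Normal] :
    Rep.res (QuotientGroup.mk' K) (Rep.leftRegular F (G ⧸ K)) ≅ Rep.ofMulAction F G (G ⧸ K) :=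
  Rep.mkIso (Representation.Equiv.mk (LinearEquiv.refl _ _) fun g =>
    MonoidAlgebra.lhom_ext' fun q => LinearMap.ext fun a => by
      induction q using QuotientGroup.induction_on
      simp [Representation.ofMulAction_single])
end Permutation

theorem stmt11_general (F : Type) [Field F]
    (V : Type) [Group V] [Finite V] (U K : Subgroup V) [K.Normal] (hKU : K ≤ U)
    (F₀ : Rep.{0} F (U.map (QuotientGroup.mk' K))) [FiniteDimensional F F₀.V]
    (hproj : Projective F₀) :
    ∀ M : Rep.{0} F V, RepIndecomposable M →
      IsDirectSummand M (ind U ((Rep.resFunctor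
        ((QuotientGroup.mk' K).subgroupMap U)).obj F₀)) →
      (∃ Q : Rep.{0} F (V ⧸ K), Projective Q ∧
        Nonempty (M ≅ (Rep.resFunctor (QuotientGroup.mk' K)).obj Q)) ∧
      (∃ n : ℕ, IsDirectSummand M (⨁ fun _ : Fin n => Rep.ofMulAction F V (V ⧸ K))) ∧
      Exprojective M := by
  intro M _ hM
  obtain ⟨hMN⟩ := isDirectSummand_iff_nonempty_retract.mp hM
  have hK : K ≤ M.ρ.ker := hMN.le_ker_ρ (le_ker_ind_res F₀ hKU)
  have hQP : Retract (descend M hK) (ind (U.map (QuotientGroup.mk' K)) F₀) :=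
    (((descendIso M hK).symm.retract.trans hMN).trans (indInflIso F₀ hKU).retract).preimage
      (inflFullyFaithful K)
  have hQ : Projective (descend M hK) := hQP.projective
  have : FiniteDimensional F (descend M hK).V := hMN.finiteDimensional
  obtain ⟨n, ⟨hQn⟩⟩ := exists_retract_biproduct_leftRegular (descend M hK)
  have hMn : IsDirectSummand M (⨁ fun _ : Fin n => Rep.ofMulAction F V (V ⧸ K)) :=
    isDirectSummand_iff_nonempty_retract.mpr ⟨(descendIso M hK).retract.trans
      ((hQn.map (Rep.resFunctor _)).trans (Retract.ofIso (Functor.mapBiproduct _ _ ≪≫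
        biproduct.mapIso fun _ => inflLeftRegularIso K)))⟩
  exact ⟨⟨descend M hK, hQ, ⟨descendIso M hK⟩⟩, ⟨n, hMn⟩,
    n, fun _ => K, fun _ => inferInstance, hMn⟩

/-- for `K ⊴ V`, `K ≤ U ≤ V` and a finite-dimensional projective
`F[U/K]`-module `F₀`, every indecomposable direct summand `M` of
`Ind_U^V (Inf_{U/K} F₀)` is the inflation of a projective `F[V/K]`-module; in
particular `M` is a direct summand of a finite direct sum of copies of the
permutation module `F[V/K]`, hence exprojective. -/
theorem stmt11 (p : ℕ) (hp : p.Prime) (F : Type) [Field F] [CharP F p]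
    (V : Type) [Group V] [Finite V] (U K : Subgroup V) [K.Normal] (hKU : K ≤ U)
    (F₀ : Rep.{0} F (U.map (QuotientGroup.mk' K))) [FiniteDimensional F F₀.V]
    (hproj : Projective F₀) :
    ∀ M : Rep.{0} F V, RepIndecomposable M →
      IsDirectSummand M (ind U ((Rep.resFunctor
        ((QuotientGroup.mk' K).subgroupMap U)).obj F₀)) →
      (∃ Q : Rep.{0} F (V ⧸ K), Projective Q ∧
        Nonempty (M ≅ (Rep.resFunctor (QuotientGroup.mk' K)).obj Q)) ∧
      (∃ n : ℕ, IsDirectSummand M (⨁ fun _ : Fin n => Rep.ofMulAction F V (V ⧸ K))) ∧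
      Exprojective M :=
  stmt11_general F V U K hKU F₀ hproj
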